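/- arXiv:1411.0576 — 2 statements merged into one kernel-verified Lean document; each statement's English description precedes it below -/
import Mathlib

section
/- Let V₀ > 0 be a constant and let U ∈ H^s(ℝ^N) ∩ C¹(ℝ^N) be a positive, bounded, radially symmetric function with ∂_i U ∈ H^s(ℝ^N) for each i, satisfying (−Δ)^s U + V₀ U = U^p pointwise in ℝ^N. Then for every i, j ∈ {1,…,N} with i ≠ j: ∫_{ℝ^N} U^{p−1} (∂_i U)(∂_j U) dx = 0 and ⟨∂_i U, ∂_j U⟩_{D^{s,2}} + V₀ ∫_{ℝ^N} (∂_i U)(∂_j U) dx = 0. -/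
open MeasureTheory Filter Metric

noncomputable section

abbrev Spc (N : ℕ) := EuclideanSpace ℝ (Fin N)

/-- Fourier transform of a real function on ℝ^N. -/
def FT {N : ℕ} (u : Spc N → ℝ) : Spc N → ℂ :=
  FourierTransform.fourier (fun x => (u x : ℂ))

/-- Squared Gagliardo/Fourier seminorm ‖u‖_{D^{s,2}}². -/
def Ds2sq {N : ℕ} (s : ℝ) (u : Spc N → ℝ) : ℝ :=
  ∫ ξ : Spc N, ‖ξ‖ ^ (2*s) * ‖FT u ξ‖ ^ 2

/-- Membership in H^s(ℝ^N). -/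
def MemHs {N : ℕ} (s : ℝ) (u : Spc N → ℝ) : Prop :=
  MemLp u 2 (volume : Measure (Spc N)) ∧
    Integrable (fun ξ : Spc N => ‖ξ‖ ^ (2*s) * ‖FT u ξ‖ ^ 2)

/-- L^q norm (for finite q, as a concrete integral expression). -/
def lpnorm {N : ℕ} (q : ℝ) (u : Spc N → ℝ) : ℝ :=
  (∫ x : Spc N, |u x| ^ q) ^ (1/q)

/-- Fractional Laplacian with normalizing constant c. -/
def fracLap {N : ℕ} (s c : ℝ) (u : Spc N → ℝ) (x : Spc N) : ℝ :=
  c * ∫ y : Spc N, (2 * u x - u (x + y) - u (x - y)) / ‖y‖ ^ ((N : ℝ) + 2*s)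

/-- Real inner product ⟨u,w⟩_{D^{s,2}}. -/
def Dinner {N : ℕ} (s : ℝ) (u w : Spc N → ℝ) : ℝ :=
  ∫ ξ : Spc N, ‖ξ‖ ^ (2*s) * (FT u ξ * (starRingEnd ℂ) (FT w ξ)).re

/-- i-th partial derivative. -/
def pd {N : ℕ} (i : Fin N) (u : Spc N → ℝ) (x : Spc N) : ℝ :=
  fderiv ℝ u x (EuclideanSpace.single i 1)

def Radial {N : ℕ} (u : Spc N → ℝ) : Prop := ∀ x y : Spc N, ‖x‖ = ‖y‖ → u x = u y

/-! Reflecting the `i`-th coordinate is a linear isometry `A` that fixes the radial `U`, so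
`∂_i U ∘ A = -∂_i U` while `∂_j U ∘ A = ∂_j U`; since the Fourier transform commutes with
isometries, the same holds for their Fourier transforms. Each integrand in the claim is thus odd
under the measure-preserving map `A`, and its integral vanishes. -/

open FourierTransform

section Reflections

variable {V : Type*} [NormedAddCommGroup V] [InnerProductSpace ℝ V] [FiniteDimensional ℝ V]
  [MeasurableSpace V] [BorelSpace V]

theorem integral_eq_zero_of_comp_eq_neg {F : Type*} [NormedAddCommGroup F] [NormedSpace ℝ F]
    (A : V ≃ₗᵢ[ℝ] V) {f : V → F} (hf : ∀ x, f (A x) = -f x) : ∫ x, f x = 0 := by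
  have h := A.measurePreserving.integral_comp A.toHomeomorph.measurableEmbedding f
  simp only [hf, integral_neg] at h
  have := IsAddTorsionFree.of_isTorsionFree ℝ F
  exact neg_eq_self.mp h

variable {E : Type*} [NormedAddCommGroup E] [NormedSpace ℂ E]

theorem fourier_apply_map_of_comp_eq (A : V ≃ₗᵢ[ℝ] V) {f : V → E} (hf : ∀ x, f (A x) = f x)
    (w : V) : 𝓕 f (A w) = 𝓕 f w := by
  rw [← Real.fourier_comp_linearIsometry, show f ∘ A = f from funext hf]

theorem fourier_apply_map_of_comp_eq_neg (A : V ≃ₗᵢ[ℝ] V) {f : V → E} (hf : ∀ x, f (A x) = -f x)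
    (w : V) : 𝓕 f (A w) = -𝓕 f w := by
  rw [← Real.fourier_comp_linearIsometry, Real.fourier_eq, Real.fourier_eq, ← integral_neg]
  simp only [Function.comp_apply, hf, smul_neg]

end Reflections

theorem fderiv_apply_map_of_comp_eq {𝕜 E F : Type*} [NontriviallyNormedField 𝕜]
    [NormedAddCommGroup E] [NormedSpace 𝕜 E] [NormedAddCommGroup F] [NormedSpace 𝕜 F]
    (A : E ≃L[𝕜] E) {f : E → F} (hf : ∀ x, f (A x) = f x) (x v : E) :
    fderiv 𝕜 f (A x) (A v) = fderiv 𝕜 f x v := by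
  conv_rhs => rw [← show f ∘ A = f from funext hf, A.comp_right_fderiv]
  rfl

theorem dinner_eq_zero_of_comp_eq_neg_of_comp_eq {N : ℕ} (s : ℝ) (A : Spc N ≃ₗᵢ[ℝ] Spc N)
    {u w : Spc N → ℝ} (hu : ∀ x, u (A x) = -u x) (hw : ∀ x, w (A x) = w x) :
    Dinner s u w = 0 := by
  have hFu : ∀ ξ, FT u (A ξ) = -FT u ξ :=
    fourier_apply_map_of_comp_eq_neg A fun x => by simp only [hu, Complex.ofReal_neg]
  have hFw : ∀ ξ, FT w (A ξ) = FT w ξ :=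
    fourier_apply_map_of_comp_eq A fun x => by simp only [hw]
  refine integral_eq_zero_of_comp_eq_neg A fun ξ => ?_
  simp only [A.norm_map, hFu, hFw, neg_mul, Complex.neg_re, mul_neg]

def coordReflection {N : ℕ} (i : Fin N) : Spc N ≃ₗᵢ[ℝ] Spc N :=
  (ℝ ∙ EuclideanSpace.single i (1 : ℝ))ᗮ.reflection

theorem coordReflection_single_self {N : ℕ} (i : Fin N) :
    coordReflection i (EuclideanSpace.single i 1) = -EuclideanSpace.single i 1 :=
  Submodule.reflection_orthogonalComplement_singleton_eq_neg _

theorem coordReflection_single_of_ne {N : ℕ} {i j : Fin N} (hij : i ≠ j) :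
    coordReflection i (EuclideanSpace.single j 1) = EuclideanSpace.single j 1 := by
  refine Submodule.reflection_mem_subspace_eq_self ?_
  rw [Submodule.mem_orthogonal_singleton_iff_inner_right, EuclideanSpace.inner_single_left]
  simp [hij.symm]

section PartialDerivatives

variable {N : ℕ} {U : Spc N → ℝ} {i : Fin N} (hU : ∀ x, U (coordReflection i x) = U x)
include hU

theorem pd_coordReflection_self (x : Spc N) : pd i U (coordReflection i x) = -pd i U x := by
  have h := fderiv_apply_map_of_comp_eq (coordReflection i).toContinuousLinearEquiv hU x
    (EuclideanSpace.single i 1)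
  simp only [LinearIsometryEquiv.coe_toContinuousLinearEquiv, coordReflection_single_self,
    map_neg] at h
  simp only [pd, ← h, neg_neg]

theorem pd_coordReflection_of_ne {j : Fin N} (hij : i ≠ j) (x : Spc N) :
    pd j U (coordReflection i x) = pd j U x := by
  have h := fderiv_apply_map_of_comp_eq (coordReflection i).toContinuousLinearEquiv hU x
    (EuclideanSpace.single j 1)
  simpa only [pd, LinearIsometryEquiv.coe_toContinuousLinearEquiv,
    coordReflection_single_of_ne hij] using h

end PartialDerivatives

theorem ground_state_derivatives_mutually_orthogonal_general
    (N : ℕ) (s : ℝ) (p : ℝ) (V₀ : ℝ) (U : Spc N → ℝ) (hUrad : Radial U) :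
    ∀ i j : Fin N, i ≠ j →
      (∫ x : Spc N, U x ^ (p - 1) * pd i U x * pd j U x = 0) ∧
      Dinner s (pd i U) (pd j U) + V₀ * ∫ x : Spc N, pd i U x * pd j U x = 0 := by
  intro i j hij
  set A := coordReflection i
  have hU : ∀ x, U (A x) = U x := fun x => hUrad _ _ (A.norm_map x)
  have hi := pd_coordReflection_self hU
  have hj := pd_coordReflection_of_ne hU hij
  refine ⟨integral_eq_zero_of_comp_eq_neg A fun x => ?_, ?_⟩
  · rw [hU, hi, hj]; ring
  · rw [dinner_eq_zero_of_comp_eq_neg_of_comp_eq s A hi hj,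
      integral_eq_zero_of_comp_eq_neg A fun x => by rw [hi, hj, neg_mul], mul_zero, add_zero]

/-- distinct partial derivatives of the ground state are orthogonal. -/
theorem ground_state_derivatives_mutually_orthogonal
    (N : ℕ) (hN : 1 ≤ N) (s : ℝ) (hs : s ∈ Set.Ioo (0:ℝ) 1) (hNs : 2 * s < (N : ℝ))
    (p : ℝ) (hp : 1 < p) (hp' : p < ((N : ℝ) + 2*s) / ((N : ℝ) - 2*s))
    (c : ℝ) (hc : 0 < c) (V₀ : ℝ) (hV₀ : 0 < V₀)
    (U : Spc N → ℝ) (hUH : MemHs s U) (hUC1 : ContDiff ℝ 1 U)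
    (hUpos : ∀ x, 0 < U x) (hUbd : ∃ M : ℝ, ∀ x, U x ≤ M)
    (hUrad : Radial U)
    (hpdH : ∀ i : Fin N, MemHs s (pd i U))
    (heq : ∀ x : Spc N, fracLap s c U x + V₀ * U x = U x ^ p) :
    ∀ i j : Fin N, i ≠ j →
      (∫ x : Spc N, U x ^ (p - 1) * pd i U x * pd j U x = 0) ∧
      Dinner s (pd i U) (pd j U) + V₀ * ∫ x : Spc N, pd i U x * pd j U x = 0 :=
  ground_state_derivatives_mutually_orthogonal_general N s p V₀ U hUrad
end
end

section
/- Let c̄ > 0, R > 0, and let z : ℝ^N → ℝ be a bounded C² function with z(x) → 0 as |x| → ∞. Assume that z(x) > 0 for all x ∈ B(0,R), and that (−Δ)^s z(x) + c̄ z(x) ≥ 0 for all x ∈ ℝ^N \ B(0,R). Then z(x) ≥ 0 for all x ∈ ℝ^N. -/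
/-!
If `z` were negative somewhere, its decay at infinity would give it a global minimum `x₀` with
`z x₀ < 0`, and positivity on the ball puts `x₀` outside `B(0,R)`. At a global minimum every
second difference `2 z x₀ - z (x₀ + y) - z (x₀ - y)` is nonpositive, so `(-Δ)^s z x₀ ≤ 0`, and
then `(-Δ)^s z x₀ + c̄ z x₀ < 0`, contradicting the inequality outside the ball.
-/

open MeasureTheory Filter Metric

noncomputable section

theorem Continuous.exists_forall_le_of_decay {E : Type*} [SeminormedAddCommGroup E]
    [ProperSpace E] {f : E → ℝ} (hf : Continuous f)
    (hdecay : ∀ δ > (0:ℝ), ∃ ρ : ℝ, ∀ x : E, ρ ≤ ‖x‖ → |f x| ≤ δ) {x₁ : E} (hx₁ : f x₁ < 0) :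
    ∃ x₀, ∀ y, f x₀ ≤ f y := by
  obtain ⟨ρ, hρ⟩ := hdecay (-f x₁) (by linarith)
  refine hf.exists_forall_le' x₁ ?_
  filter_upwards [tendsto_norm_cocompact_atTop.eventually_ge_atTop ρ] with x hx
  linarith [(abs_le.mp (hρ x hx)).1]

theorem fracLap_nonpos_of_forall_le {N : ℕ} {s c : ℝ} (hc : 0 ≤ c) {u : Spc N → ℝ}
    {x₀ : Spc N} (hmin : ∀ y, u x₀ ≤ u y) : fracLap s c u x₀ ≤ 0 := by
  -- `integral_nonpos` needs no integrability: a non-integrable integrand has integral `0`.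
  refine mul_nonpos_of_nonneg_of_nonpos hc (integral_nonpos fun y => ?_)
  refine div_nonpos_of_nonpos_of_nonneg ?_ (by positivity)
  linarith [hmin (x₀ + y), hmin (x₀ - y)]

theorem fractional_maximum_principle_general
    (N : ℕ) (s : ℝ)
    (c : ℝ) (hc : 0 < c)
    (cbar : ℝ) (hcbar : 0 < cbar) (R : ℝ)
    (z : Spc N → ℝ) (hz : ContDiff ℝ 2 z)
    (hzlim : ∀ δ > (0:ℝ), ∃ ρ : ℝ, ∀ x : Spc N, ρ ≤ ‖x‖ → |z x| ≤ δ)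
    (hzpos : ∀ x ∈ ball (0 : Spc N) R, 0 < z x)
    (hineq : ∀ x : Spc N, x ∉ ball (0 : Spc N) R → 0 ≤ fracLap s c z x + cbar * z x) :
    ∀ x : Spc N, 0 ≤ z x := by
  by_contra! ⟨x₁, hx₁⟩
  obtain ⟨x₀, hmin⟩ := hz.continuous.exists_forall_le_of_decay hzlim hx₁
  have hx₀ : z x₀ < 0 := (hmin x₁).trans_lt hx₁
  have hout : x₀ ∉ ball (0 : Spc N) R := fun hmem => (hzpos x₀ hmem).not_gt hx₀
  have hlap := fracLap_nonpos_of_forall_le (s := s) hc.le hmin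
  linarith [hineq x₀ hout, mul_neg_of_pos_of_neg hcbar hx₀]

/-- a maximum-principle-type result for the fractional Laplacian. -/
theorem fractional_maximum_principle
    (N : ℕ) (hN : 1 ≤ N) (s : ℝ) (hs : s ∈ Set.Ioo (0:ℝ) 1)
    (c : ℝ) (hc : 0 < c)
    (cbar : ℝ) (hcbar : 0 < cbar) (R : ℝ) (hR : 0 < R)
    (z : Spc N → ℝ) (hz : ContDiff ℝ 2 z) (hzbd : ∃ M : ℝ, ∀ x, |z x| ≤ M)
    (hzlim : ∀ δ > (0:ℝ), ∃ ρ : ℝ, ∀ x : Spc N, ρ ≤ ‖x‖ → |z x| ≤ δ)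
    (hzpos : ∀ x ∈ ball (0 : Spc N) R, 0 < z x)
    (hineq : ∀ x : Spc N, x ∉ ball (0 : Spc N) R → 0 ≤ fracLap s c z x + cbar * z x) :
    ∀ x : Spc N, 0 ≤ z x :=
  fractional_maximum_principle_general N s c hc cbar hcbar R z hz hzlim hzpos hineq
end
end
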